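/- Let p₂(x, ξ) = ½(x₁² + ξ₁²) + (x₂² + ξ₂²) and q(x, ξ) = ¼ ( (x₁² − ξ₁²) x₂ + 2 x₁ ξ₁ ξ₂ ) on ℝ⁴. A point (x₁, x₂, ξ₁, ξ₂) with p₂(x, ξ) = 1 satisfies the Lagrange criticality condition ∇q(x, ξ) = μ ∇p₂(x, ξ) for some μ ∈ ℝ if and only if either x₁ = ξ₁ = 0, or ( x₁² + ξ₁² = 4/3, x₂² + ξ₂² = 1/3 and 2 x₁ ξ₁ x₂ = (x₁² − ξ₁²) ξ₂ ). Consequently, the set of critical values of q restricted to the energy surface p₂⁻¹(1) is exactly { −√3/9, 0, √3/9 }, and the critical set consists of exactly three circles, each of which is a single closed trajectory of the Hamiltonian flow of p₂. -/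

import Mathlib

/-- `p₂(v) = ½(x₁² + ξ₁²) + (x₂² + ξ₂²)`, with `v = (x₁, x₂, ξ₁, ξ₂)`. -/
noncomputable def p2v (v : Fin 4 → ℝ) : ℝ :=
  (1 / 2) * ((v 0) ^ 2 + (v 2) ^ 2) + ((v 1) ^ 2 + (v 3) ^ 2)

/-- `q(v) = ¼((x₁² − ξ₁²)x₂ + 2x₁ξ₁ξ₂)`. -/
noncomputable def qbv (v : Fin 4 → ℝ) : ℝ :=
  (1 / 4) * (((v 0) ^ 2 - (v 2) ^ 2) * (v 1) + 2 * (v 0) * (v 2) * (v 3))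

/-- Gradient of a function on `ℝ⁴` via coordinatewise derivatives. -/
noncomputable def grad4 (f : (Fin 4 → ℝ) → ℝ) (v : Fin 4 → ℝ) : Fin 4 → ℝ :=
  fun i => deriv (fun u => f (Function.update v i u)) (v i)

/-- The (1,2)-oscillator Hamiltonian flow of `p₂`. -/
noncomputable def flow12 (t : ℝ) (v : Fin 4 → ℝ) : Fin 4 → ℝ :=
  ![v 0 * Real.cos t + v 2 * Real.sin t,
    v 1 * Real.cos (2 * t) + v 3 * Real.sin (2 * t),
    -(v 0) * Real.sin t + v 2 * Real.cos t,
    -(v 1) * Real.sin (2 * t) + v 3 * Real.cos (2 * t)]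

/-!
In complex coordinates `z = x₁ + iξ₁`, `w = x₂ + iξ₂` one has `p₂ = ½|z|² + |w|²`,
`q = ¼ Re(z² w̄)`, and the flow is `(z, w) ↦ (e^{-it} z, e^{-2it} w)`, which preserves `z² w̄`
and hence `q`. Eliminating `μ` from the Lagrange system gives, unless `z = 0`, `Im(z² w̄) = 0` and
`|z|² = 4|w|²`, so `|z|² = 4/3`, `|w|² = 1/3` and `z² w̄ = ±4√3/9`. For either sign `w = ±(√3/4) z²`
is determined by `z`, so besides the circle `z = 0` the critical set consists of two orbits,
parametrised by `z` on the circle `|z|² = 4/3`. The three orbits carry the distinct values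
`0, ±√3/9` of the invariant `q`, hence are disjoint.
-/

open Real

lemma exists_mul_cos_eq_mul_sin_eq {x y r : ℝ} (hr : 0 ≤ r) (h : x ^ 2 + y ^ 2 = r ^ 2) :
    ∃ θ : ℝ, r * cos θ = x ∧ r * sin θ = y := by
  have hnorm : ‖(⟨x, y⟩ : ℂ)‖ = r := by
    rw [Complex.norm_def, Complex.normSq_mk, ← sq, ← sq, h, sqrt_sq hr]
  exact ⟨Complex.arg ⟨x, y⟩, by rw [← hnorm, Complex.norm_mul_cos_arg],
    by rw [← hnorm, Complex.norm_mul_sin_arg]⟩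

lemma grad4_p2v (v : Fin 4 → ℝ) : grad4 p2v v = ![v 0, 2 * v 1, v 2, 2 * v 3] := by
  funext i
  fin_cases i <;> simp (disch := fun_prop) [grad4, p2v, Function.update] <;> ring

lemma grad4_qbv (v : Fin 4 → ℝ) :
    grad4 qbv v = ![(v 0 * v 1 + v 2 * v 3) / 2, (v 0 ^ 2 - v 2 ^ 2) / 4,
      (v 0 * v 3 - v 2 * v 1) / 2, v 0 * v 2 / 2] := by
  funext i
  fin_cases i <;> simp (disch := fun_prop) [grad4, qbv, Function.update] <;> ring

lemma grad4_qbv_eq_smul_iff (v : Fin 4 → ℝ) (μ : ℝ) :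
    grad4 qbv v = μ • grad4 p2v v ↔
      (v 0 * v 1 + v 2 * v 3) / 2 = μ * v 0 ∧ (v 0 ^ 2 - v 2 ^ 2) / 4 = μ * (2 * v 1) ∧
        (v 0 * v 3 - v 2 * v 1) / 2 = μ * v 2 ∧ v 0 * v 2 / 2 = μ * (2 * v 3) := by
  simp [grad4_qbv, grad4_p2v, funext_iff, Fin.forall_fin_succ]

lemma grad4_qbv_eq_smul_iff_of_p2v_eq_one {v : Fin 4 → ℝ} (hp : p2v v = 1) :
    (∃ μ : ℝ, grad4 qbv v = μ • grad4 p2v v) ↔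
      ((v 0 = 0 ∧ v 2 = 0) ∨
        (v 0 ^ 2 + v 2 ^ 2 = 4 / 3 ∧ v 1 ^ 2 + v 3 ^ 2 = 1 / 3 ∧
          2 * v 0 * v 2 * v 1 = (v 0 ^ 2 - v 2 ^ 2) * v 3)) := by
  unfold p2v at hp
  simp only [grad4_qbv_eq_smul_iff]
  constructor
  · rintro ⟨μ, h0, h1, h2, h3⟩
    by_cases hμ : μ = 0
    · subst hμ
      have hz : v 0 ^ 2 + v 2 ^ 2 = 0 := by nlinarith
      exact Or.inl ⟨by nlinarith, by nlinarith⟩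
    · have him : 2 * v 0 * v 2 * v 1 = (v 0 ^ 2 - v 2 ^ 2) * v 3 := by
        linear_combination 2 * v 2 * h0 - 2 * v 0 * h2
      -- `Re(z² w̄)` equals both `2μ|z|²` and `8μ|w|²`
      have hzw : μ * ((v 0 ^ 2 + v 2 ^ 2) - 4 * (v 1 ^ 2 + v 3 ^ 2)) = 0 := by
        linear_combination 2 * v 1 * h1 + 2 * v 3 * h3 - v 0 * h0 - v 2 * h2
      have hzw' := (mul_eq_zero.1 hzw).resolve_left hμ
      exact Or.inr ⟨by linarith, by linarith, him⟩
  · rintro (⟨h0, h2⟩ | ⟨hz, hw, him⟩)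
    · exact ⟨0, by simp [h0, h2]⟩
    · refine ⟨3 * ((v 0 ^ 2 - v 2 ^ 2) * v 1 + 2 * v 0 * v 2 * v 3) / 8, ?_, ?_, ?_, ?_⟩
      · linear_combination (-(3 / 8) * (v 0 * v 1 + v 2 * v 3)) * hz + (3 / 8 * v 2) * him
      · linear_combination (-(3 / 4) * (v 0 ^ 2 - v 2 ^ 2)) * hw - (3 / 4 * v 3) * him
      · linear_combination (-(3 / 8) * (v 0 * v 3 - v 2 * v 1)) * hz - (3 / 8 * v 0) * him
      · linear_combination (-(3 / 2) * v 0 * v 2) * hw + (3 / 4 * v 1) * him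

section

-- `z = a + ib`, `w = c + id` with `|z|² = R ≠ 0`: then `z² w̄ = R s` iff `R w = s z²`.
variable {a b c d R s : ℝ}

lemma re_eq_and_im_eq_zero_iff (hR : a ^ 2 + b ^ 2 = R) (hR0 : R ≠ 0) :
    ((a ^ 2 - b ^ 2) * c + 2 * a * b * d = R * s ∧ 2 * a * b * c = (a ^ 2 - b ^ 2) * d) ↔
      (R * c = s * (a ^ 2 - b ^ 2) ∧ R * d = 2 * s * a * b) := by
  constructor
  · rintro ⟨hre, him⟩
    constructor
    · refine mul_left_cancel₀ hR0 ?_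
      linear_combination (a ^ 2 - b ^ 2) * hre + 2 * a * b * him - c * (a ^ 2 + b ^ 2 + R) * hR
    · refine mul_left_cancel₀ hR0 ?_
      linear_combination 2 * a * b * hre - (a ^ 2 - b ^ 2) * him - d * (a ^ 2 + b ^ 2 + R) * hR
  · rintro ⟨hc, hd⟩
    constructor
    · refine mul_left_cancel₀ hR0 ?_
      linear_combination (a ^ 2 - b ^ 2) * hc + 2 * a * b * hd + s * (a ^ 2 + b ^ 2 + R) * hR
    · refine mul_left_cancel₀ hR0 ?_
      linear_combination 2 * a * b * hc - (a ^ 2 - b ^ 2) * hd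

lemma sq_add_sq_eq_and_im_eq_zero_iff (hR : a ^ 2 + b ^ 2 = R) (hR0 : R ≠ 0) :
    (c ^ 2 + d ^ 2 = s ^ 2 ∧ 2 * a * b * c = (a ^ 2 - b ^ 2) * d) ↔
      (R * c = s * (a ^ 2 - b ^ 2) ∧ R * d = 2 * s * a * b) ∨
        (R * c = -s * (a ^ 2 - b ^ 2) ∧ R * d = 2 * -s * a * b) := by
  constructor
  · rintro ⟨hw, him⟩
    -- `Re(z² w̄)² + Im(z² w̄)² = |z|⁴ |w|²`
    have hre : ((a ^ 2 - b ^ 2) * c + 2 * a * b * d) ^ 2 = (R * s) ^ 2 := by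
      linear_combination (a ^ 2 + b ^ 2) ^ 2 * hw + s ^ 2 * (a ^ 2 + b ^ 2 + R) * hR -
        (2 * a * b * c - (a ^ 2 - b ^ 2) * d) * him
    rcases sq_eq_sq_iff_eq_or_eq_neg.1 hre with hre | hre
    · exact Or.inl ((re_eq_and_im_eq_zero_iff hR hR0).1 ⟨hre, him⟩)
    · exact Or.inr ((re_eq_and_im_eq_zero_iff hR hR0).1 ⟨by linear_combination hre, him⟩)
  · intro h
    obtain ⟨s', hs', hc, hd⟩ : ∃ s', s' ^ 2 = s ^ 2 ∧
        R * c = s' * (a ^ 2 - b ^ 2) ∧ R * d = 2 * s' * a * b := by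
      rcases h with h | h
      exacts [⟨s, rfl, h⟩, ⟨-s, neg_sq s, h⟩]
    refine ⟨mul_left_cancel₀ (pow_ne_zero 2 hR0) ?_,
      ((re_eq_and_im_eq_zero_iff hR hR0).2 ⟨hc, hd⟩).2⟩
    linear_combination (R * c + s' * (a ^ 2 - b ^ 2)) * hc + (R * d + 2 * s' * a * b) * hd +
      s' ^ 2 * (a ^ 2 + b ^ 2 + R) * hR + R ^ 2 * hs'

end

lemma qbv_flow12 (t : ℝ) (v : Fin 4 → ℝ) : qbv (flow12 t v) = qbv v := by
  simp only [qbv, flow12, Matrix.cons_val_zero, Matrix.cons_val_one, Matrix.cons_val_two,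
    Matrix.cons_val_three, Matrix.head_cons, Matrix.tail_cons]
  rw [cos_two_mul', sin_two_mul]
  linear_combination ((v 0 ^ 2 - v 2 ^ 2) * v 1 + 2 * v 0 * v 2 * v 3) / 4 *
    (sin t ^ 2 + cos t ^ 2 + 1) * sin_sq_add_cos_sq t

lemma image_qbv_range_flow12 (v : Fin 4 → ℝ) :
    qbv '' Set.range (fun t => flow12 t v) = {qbv v} := by
  rw [← Set.range_comp, Function.comp_def]
  simp only [qbv_flow12, Set.range_const]

lemma range_flow12_inter_eq_empty {u u' : Fin 4 → ℝ} (h : qbv u ≠ qbv u') :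
    Set.range (fun t => flow12 t u) ∩ Set.range (fun t => flow12 t u') = ∅ := by
  refine Set.eq_empty_iff_forall_notMem.2 fun w ⟨⟨t, ht⟩, ⟨t', ht'⟩⟩ => h ?_
  rw [← qbv_flow12 t u, ← qbv_flow12 t' u']
  exact congrArg qbv (ht.trans ht'.symm)

lemma qbv_cons (r s : ℝ) : qbv ![r, s, 0, 0] = r ^ 2 * s / 4 := by
  simp [qbv]; ring

lemma range_flow12_zero_left {s : ℝ} (hs : 0 ≤ s) :
    Set.range (fun t => flow12 t ![0, s, 0, 0]) =
      {w | w 0 = 0 ∧ w 2 = 0 ∧ w 1 ^ 2 + w 3 ^ 2 = s ^ 2} := by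
  ext w
  constructor
  · rintro ⟨t, rfl⟩
    simp only [flow12, Set.mem_ofPred_eq, Matrix.cons_val_zero, Matrix.cons_val_one,
      Matrix.cons_val_two, Matrix.cons_val_three, Matrix.head_cons, Matrix.tail_cons]
    exact ⟨by ring, by ring, by linear_combination s ^ 2 * sin_sq_add_cos_sq (2 * t)⟩
  · rintro ⟨h0, h2, h13⟩
    obtain ⟨θ, hc, hs⟩ := exists_mul_cos_eq_mul_sin_eq hs (x := w 1) (y := -w 3)
      (by linear_combination h13)
    refine ⟨θ / 2, ?_⟩
    funext i
    fin_cases i <;> simp [flow12, mul_div_cancel₀, h0, h2, hc, hs]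

lemma range_flow12 {r s : ℝ} (hr : 0 < r) :
    Set.range (fun t => flow12 t ![r, s, 0, 0]) =
      {w | w 0 ^ 2 + w 2 ^ 2 = r ^ 2 ∧ r ^ 2 * w 1 = s * (w 0 ^ 2 - w 2 ^ 2) ∧
        r ^ 2 * w 3 = 2 * s * w 0 * w 2} := by
  ext w
  constructor
  · rintro ⟨t, rfl⟩
    simp only [flow12, Set.mem_ofPred_eq, Matrix.cons_val_zero, Matrix.cons_val_one,
      Matrix.cons_val_two, Matrix.cons_val_three, Matrix.head_cons, Matrix.tail_cons]
    refine ⟨?_, ?_, ?_⟩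
    · linear_combination r ^ 2 * sin_sq_add_cos_sq t
    · rw [cos_two_mul']; ring
    · rw [sin_two_mul]; ring
  · rintro ⟨hz, h1, h3⟩
    obtain ⟨θ, hc, hs⟩ := exists_mul_cos_eq_mul_sin_eq hr.le (x := w 0) (y := -w 2)
      (by linear_combination hz)
    have hr2 : r ^ 2 ≠ 0 := by positivity
    refine ⟨θ, ?_⟩
    funext i
    have hw2 : w 2 = -(r * sin θ) := by linarith
    rw [← hc, hw2] at h1 h3
    fin_cases i <;> simp only [flow12, Fin.isValue, Matrix.cons_val_zero, Matrix.cons_val,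
      zero_mul, add_zero, Matrix.cons_val_one, neg_mul, Fin.zero_eta, Fin.mk_one, Fin.reduceFinMk]
    · exact hc
    · refine mul_left_cancel₀ hr2 ?_
      rw [cos_two_mul']
      linear_combination -h1
    · exact hw2.symm
    · refine mul_left_cancel₀ hr2 ?_
      rw [sin_two_mul]
      linear_combination -h3

lemma critSet_eq :
    {v : Fin 4 → ℝ | p2v v = 1 ∧ ∃ μ : ℝ, grad4 qbv v = μ • grad4 p2v v} =
      Set.range (fun t => flow12 t ![0, 1, 0, 0]) ∪
        Set.range (fun t => flow12 t ![2 * √3 / 3, √3 / 3, 0, 0]) ∪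
        Set.range (fun t => flow12 t ![2 * √3 / 3, -(√3 / 3), 0, 0]) := by
  have h3 : √3 ^ 2 = 3 := sq_sqrt (by norm_num)
  have hr2 : (2 * √3 / 3) ^ 2 = 4 / 3 := by linear_combination (4 / 9) * h3
  have hs2 : (√3 / 3) ^ 2 = 1 / 3 := by linear_combination (1 / 9) * h3
  rw [range_flow12_zero_left zero_le_one, range_flow12 (by positivity),
    range_flow12 (by positivity), hr2]
  have of_branch : ∀ v : Fin 4 → ℝ, v 0 ^ 2 + v 2 ^ 2 = 4 / 3 → v 1 ^ 2 + v 3 ^ 2 = 1 / 3 →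
      2 * v 0 * v 2 * v 1 = (v 0 ^ 2 - v 2 ^ 2) * v 3 →
      p2v v = 1 ∧ ∃ μ : ℝ, grad4 qbv v = μ • grad4 p2v v := by
    intro v hz hw him
    have hp : p2v v = 1 := by unfold p2v; linarith
    exact ⟨hp, (grad4_qbv_eq_smul_iff_of_p2v_eq_one hp).2 (Or.inr ⟨hz, hw, him⟩)⟩
  ext v
  simp only [Set.mem_ofPred_eq, Set.mem_union]
  constructor
  · rintro ⟨hp, hcrit⟩
    rcases (grad4_qbv_eq_smul_iff_of_p2v_eq_one hp).1 hcrit with ⟨h0, h2⟩ | ⟨hz, hw, him⟩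
    · unfold p2v at hp
      exact Or.inl (Or.inl ⟨h0, h2, by rw [h0, h2] at hp; linarith⟩)
    · rw [← hs2] at hw
      rcases (sq_add_sq_eq_and_im_eq_zero_iff hz (by norm_num)).1 ⟨hw, him⟩ with h | h
      exacts [Or.inl (Or.inr ⟨hz, h⟩), Or.inr ⟨hz, h⟩]
  · rintro ((⟨h0, h2, hw⟩ | ⟨hz, h⟩) | ⟨hz, h⟩)
    · have hp : p2v v = 1 := by unfold p2v; rw [h0, h2]; linarith
      exact ⟨hp, (grad4_qbv_eq_smul_iff_of_p2v_eq_one hp).2 (Or.inl ⟨h0, h2⟩)⟩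
    all_goals
      obtain ⟨hw, him⟩ := (sq_add_sq_eq_and_im_eq_zero_iff hz (by norm_num)).2 (by tauto)
      exact of_branch v hz (hs2 ▸ hw) him

/-- Lagrange criticality of `q` on `p₂⁻¹(1)` holds iff `x₁ = ξ₁ = 0` or
`x₁² + ξ₁² = 4/3`, `x₂² + ξ₂² = 1/3`, `2x₁ξ₁x₂ = (x₁² − ξ₁²)ξ₂`; the critical values are
exactly `{−√3/9, 0, √3/9}`; and the critical set consists of exactly three disjoint
circles, each a single closed trajectory of the Hamiltonian flow of `p₂`. -/
theorem statement15 :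
    (∀ v : Fin 4 → ℝ, p2v v = 1 →
      ((∃ μ : ℝ, grad4 qbv v = μ • grad4 p2v v) ↔
        ((v 0 = 0 ∧ v 2 = 0) ∨
         ((v 0) ^ 2 + (v 2) ^ 2 = 4 / 3 ∧ (v 1) ^ 2 + (v 3) ^ 2 = 1 / 3 ∧
           2 * v 0 * v 2 * v 1 = ((v 0) ^ 2 - (v 2) ^ 2) * v 3)))) ∧
    ({F : ℝ | ∃ v : Fin 4 → ℝ,
        p2v v = 1 ∧ (∃ μ : ℝ, grad4 qbv v = μ • grad4 p2v v) ∧ qbv v = F}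
      = {-(Real.sqrt 3 / 9), 0, Real.sqrt 3 / 9}) ∧
    (∃ C1 C2 C3 : Set (Fin 4 → ℝ),
      {v : Fin 4 → ℝ | p2v v = 1 ∧ ∃ μ : ℝ, grad4 qbv v = μ • grad4 p2v v}
        = C1 ∪ C2 ∪ C3 ∧
      C1 ∩ C2 = ∅ ∧ C1 ∩ C3 = ∅ ∧ C2 ∩ C3 = ∅ ∧
      (∃ v, C1 = Set.range (fun t => flow12 t v)) ∧
      (∃ v, C2 = Set.range (fun t => flow12 t v)) ∧
      (∃ v, C3 = Set.range (fun t => flow12 t v))) := by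
  have h3 : √3 ^ 2 = 3 := sq_sqrt (by norm_num)
  have hq0 : qbv ![0, 1, 0, 0] = 0 := by simp [qbv_cons]
  have hq_pos : qbv ![2 * √3 / 3, √3 / 3, 0, 0] = √3 / 9 := by
    rw [qbv_cons]; linear_combination (√3 / 27) * h3
  have hq_neg : qbv ![2 * √3 / 3, -(√3 / 3), 0, 0] = -(√3 / 9) := by
    rw [qbv_cons]; linear_combination (-(√3 / 27)) * h3
  have hpos : 0 < √3 / 9 := by positivity
  refine ⟨fun v => grad4_qbv_eq_smul_iff_of_p2v_eq_one, ?_, _, _, _, critSet_eq,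
    range_flow12_inter_eq_empty ?_, range_flow12_inter_eq_empty ?_,
    range_flow12_inter_eq_empty ?_, ⟨_, rfl⟩, ⟨_, rfl⟩, ⟨_, rfl⟩⟩
  · have hcrit : {F : ℝ | ∃ v : Fin 4 → ℝ,
        p2v v = 1 ∧ (∃ μ : ℝ, grad4 qbv v = μ • grad4 p2v v) ∧ qbv v = F} =
        qbv '' {v | p2v v = 1 ∧ ∃ μ : ℝ, grad4 qbv v = μ • grad4 p2v v} := by
      ext F; simp [and_assoc]
    rw [hcrit, critSet_eq, Set.image_union, Set.image_union, image_qbv_range_flow12,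
      image_qbv_range_flow12, image_qbv_range_flow12, hq0, hq_pos, hq_neg]
    ext F; simp only [Set.mem_union, Set.mem_singleton_iff, Set.mem_insert_iff]; tauto
  all_goals intro h; simp only [hq0, hq_pos, hq_neg] at h; linarith
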